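/- arXiv:2508.12367 — 4 statements merged into one kernel-verified Lean document; each statement's English description precedes it below -/
import Mathlib

section
/- Let V be a TRO with linking C*-algebra A(V), and let θ : Id(V) → Id(A(V)) be the canonical lattice isomorphism I ↦ A(I). Then a closed ideal P of V is primal (meaning: whenever closed ideals J₁,…,J_{2n+1} of V satisfy J₁J₂⋯J_{2n+1} = {0}, at least one J_k ⊆ P) if and only if A(P) is a primal ideal of the C*-algebra A(V) (meaning: whenever closed ideals K₁,…,K_m of A(V) satisfy K₁⋯K_m = {0}, some K_j ⊆ A(P)). -/
/-!
Statement 0: In a TRO `V ⊆ B(H,K)`, the closed linear span of products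
`I₁ I₂* I₃ ⋯ I_{2n+1}` of closed ideals equals their intersection.
-/

open ContinuousLinearMap

variable {H K : Type*} [NormedAddCommGroup H] [InnerProductSpace ℂ H] [CompleteSpace H]
  [NormedAddCommGroup K] [InnerProductSpace ℂ K] [CompleteSpace K]

/-- The ternary product `x y* z` of operators in `B(H, K)`. -/
noncomputable def tp (x y z : H →L[ℂ] K) : H →L[ℂ] K :=
  (x.comp (ContinuousLinearMap.adjoint y)).comp z

/-- A TRO: a norm-closed subspace of `B(H,K)` closed under the ternary product. -/
def IsTRO (V : Submodule ℂ (H →L[ℂ] K)) : Prop :=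
  IsClosed (V : Set (H →L[ℂ] K)) ∧ ∀ x ∈ V, ∀ y ∈ V, ∀ z ∈ V, tp x y z ∈ V

/-- A closed ideal of the TRO `V`: a closed subspace `I ⊆ V` with
`I V* V + V V* I ⊆ I`. -/
def IsTROIdeal (V I : Submodule ℂ (H →L[ℂ] K)) : Prop :=
  I ≤ V ∧ IsClosed (I : Set (H →L[ℂ] K)) ∧
    (∀ a ∈ I, ∀ y ∈ V, ∀ z ∈ V, tp a y z ∈ I) ∧
    (∀ x ∈ V, ∀ y ∈ V, ∀ a ∈ I, tp x y a ∈ I)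

/-- The alternating product `a₀ a₁* a₂ a₃* ⋯ a_{2n}` of `2n+1` operators. -/
noncomputable def altProd : (n : ℕ) → (Fin (2 * n + 1) → (H →L[ℂ] K)) → (H →L[ℂ] K)
  | 0, a => a 0
  | n + 1, a =>
      tp (altProd n fun i => a ⟨i.1, by have := i.isLt; omega⟩)
        (a ⟨2 * n + 1, by omega⟩) (a ⟨2 * n + 2, by omega⟩)

/-- The product of an odd family of ideals: the closed linear span of the
alternating products `a₁ a₂* a₃ ⋯ a_{2n+1}` with `a_k ∈ I_k`. -/
noncomputable def oddProdIdeal (n : ℕ) (J : Fin (2 * n + 1) → Submodule ℂ (H →L[ℂ] K)) :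
    Submodule ℂ (H →L[ℂ] K) :=
  (Submodule.span ℂ
      {x | ∃ a : Fin (2 * n + 1) → (H →L[ℂ] K),
        (∀ i, a i ∈ J i) ∧ x = altProd n a}).topologicalClosure

/-- A closed ideal `P` of the TRO `V` is primal if whenever closed ideals
`J₁, …, J_{2n+1}` of `V` have zero product, some `J_k ⊆ P`. -/
def IsTROPrimal (V P : Submodule ℂ (H →L[ℂ] K)) : Prop :=
  IsTROIdeal V P ∧ ∀ (n : ℕ) (J : Fin (2 * n + 1) → Submodule ℂ (H →L[ℂ] K)),
    (∀ i, IsTROIdeal V (J i)) → oddProdIdeal n J = ⊥ → ∃ i, J i ≤ P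

variable {A : Type*} [NonUnitalNormedRing A] [StarRing A] [CStarRing A]
  [NormedSpace ℂ A] [IsScalarTower ℂ A A] [SMulCommClass ℂ A A] [StarModule ℂ A]
  [CompleteSpace A]

/-- A closed (two-sided) ideal of the C*-algebra `A`. -/
def IsCIdeal (L : Submodule ℂ A) : Prop :=
  IsClosed (L : Set A) ∧ ∀ a : A, ∀ x ∈ L, a * x ∈ L ∧ x * a ∈ L

/-- The product `a₀ a₁ ⋯ a_m` of `m+1` elements of `A`. -/
noncomputable def mulProd : (m : ℕ) → (Fin (m + 1) → A) → A
  | 0, a => a 0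
  | m + 1, a => mulProd m (fun i => a i.castSucc) * a (Fin.last (m + 1))

/-- The product of finitely many ideals of `A`: the closed linear span of the
products of their elements. -/
noncomputable def mulProdIdeal (m : ℕ) (L : Fin (m + 1) → Submodule ℂ A) :
    Submodule ℂ A :=
  (Submodule.span ℂ
      {x | ∃ a : Fin (m + 1) → A, (∀ i, a i ∈ L i) ∧ x = mulProd m a}).topologicalClosure

/-- A closed ideal `P` of the C*-algebra `A` is primal if whenever finitely many
closed ideals of `A` have zero product, one of them is contained in `P`. -/
def IsCPrimal (P : Submodule ℂ A) : Prop :=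
  IsCIdeal P ∧ ∀ (m : ℕ) (L : Fin (m + 1) → Submodule ℂ A),
    (∀ i, IsCIdeal (L i)) → mulProdIdeal m L = ⊥ → ∃ i, L i ≤ P

/-!
Since `θ` is an order isomorphism turning products of ideals into intersections, primality of
`θ P` says: whenever finitely many closed ideals of `V` have zero intersection, one lies in `P`.
A TRO product `J₀ J₁* J₂ ⋯ J_{2n}` lies in each even-indexed `J_{2t}`, so listing every ideal
twice, `I₀, I₀, I₁, I₁, …, I_m`, gives an odd family whose product lies in `⋂ I_k`. Conversely,
if `a ∈ ⋂ J_k` then `a (a* a)ⁿ` lies in the product; when the product is zero, the self-adjoint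
operator `a* a` is nilpotent, hence zero by the C*-identity, and so `a = 0`.
-/

lemma IsSelfAdjoint.eq_zero_of_pow_eq_zero {E : Type*} [NormedRing E] [StarRing E]
    [CStarRing E] {x : E} (hx : IsSelfAdjoint x) {m : ℕ} (h : x ^ m = 0) : x = 0 := by
  have h2 : x ^ 2 ^ m = 0 := pow_eq_zero_of_le Nat.lt_two_pow_self.le h
  rw [← norm_eq_zero, ← pow_eq_zero_iff (pow_ne_zero m two_ne_zero), ← hx.norm_pow_two_pow, h2,
    norm_zero]

lemma isCIdeal_bot {A : Type*} [NonUnitalNormedRing A] [NormedSpace ℂ A] :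
    IsCIdeal (⊥ : Submodule ℂ A) :=
  ⟨by simp, fun a x hx => by simp_all⟩

section TRO

variable {V : Submodule ℂ (H →L[ℂ] K)}

lemma isTROIdeal_bot : IsTROIdeal V ⊥ := by
  refine ⟨bot_le, by simp, ?_, ?_⟩ <;> simp_all [tp]

lemma isTROIdeal_iInf {n : ℕ} {J : Fin (n + 1) → Submodule ℂ (H →L[ℂ] K)}
    (hJ : ∀ i, IsTROIdeal V (J i)) : IsTROIdeal V (⨅ i, J i) := by
  refine ⟨(iInf_le J 0).trans (hJ 0).1, ?_, ?_, ?_⟩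
  · simpa only [Submodule.coe_iInf] using isClosed_iInter fun i => (hJ i).2.1
  · simp only [Submodule.mem_iInf]
    exact fun a ha y hy z hz i => (hJ i).2.2.1 _ (ha i) _ hy _ hz
  · simp only [Submodule.mem_iInf]
    exact fun x hx y hy a ha i => (hJ i).2.2.2 _ hx _ hy _ (ha i)

lemma altProd_mem_even :
    ∀ (n : ℕ) (J : Fin (2 * n + 1) → Submodule ℂ (H →L[ℂ] K)), (∀ i, IsTROIdeal V (J i)) →
      ∀ (a : Fin (2 * n + 1) → (H →L[ℂ] K)), (∀ i, a i ∈ J i) →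
      ∀ (t : ℕ) (ht : 2 * t < 2 * n + 1), altProd n a ∈ J ⟨2 * t, ht⟩
  | 0, J, _, a, ha, t, ht => by
    obtain rfl : t = 0 := by omega
    exact ha 0
  | n + 1, J, hJ, a, ha, t, ht => by
    have hV : ∀ i, a i ∈ V := fun i => (hJ i).1 (ha i)
    have ih := altProd_mem_even n (fun i => J ⟨i, by omega⟩) (fun i => hJ _)
      (fun i => a ⟨i, by omega⟩) (fun i => ha _)
    by_cases hlt : 2 * t < 2 * n + 1
    · exact (hJ _).2.2.1 _ (ih t hlt) _ (hV _) _ (hV _)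
    · obtain rfl : t = n + 1 := by omega
      exact (hJ _).2.2.2 _ ((hJ _).1 (ih 0 (by omega))) _ (hV _) _ (ha _)

lemma oddProdIdeal_le_even {n : ℕ} {J : Fin (2 * n + 1) → Submodule ℂ (H →L[ℂ] K)}
    (hJ : ∀ i, IsTROIdeal V (J i)) (t : ℕ) (ht : 2 * t < 2 * n + 1) :
    oddProdIdeal n J ≤ J ⟨2 * t, ht⟩ := by
  refine Submodule.topologicalClosure_minimal _ ?_ (hJ _).2.1
  rw [Submodule.span_le]
  rintro _ ⟨a, ha, rfl⟩
  exact altProd_mem_even n J hJ a ha t ht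

end TRO

lemma altProd_const (a : H →L[ℂ] K) :
    ∀ n : ℕ, altProd n (fun _ : Fin (2 * n + 1) => a) = a ∘L (adjoint a ∘L a) ^ n
  | 0 => by simp [altProd, one_def]
  | n + 1 => by
    change tp (altProd n fun _ => a) a a = _
    rw [altProd_const a n, tp, pow_succ, mul_def]
    simp only [comp_assoc]

lemma eq_zero_of_altProd_const_eq_zero {a : H →L[ℂ] K} {n : ℕ}
    (h : altProd n (fun _ : Fin (2 * n + 1) => a) = 0) : a = 0 := by
  have hsa : IsSelfAdjoint (adjoint a ∘L a) := by
    rw [IsSelfAdjoint, star_eq_adjoint, adjoint_comp, adjoint_adjoint]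
  have hnil : (adjoint a ∘L a) ^ (n + 1) = 0 := by
    rw [pow_succ', mul_def, comp_assoc, ← altProd_const, h, comp_zero]
  exact adjoint_comp_self_eq_zero_iff.mp (hsa.eq_zero_of_pow_eq_zero hnil)

lemma iInf_eq_bot_of_oddProdIdeal_eq_bot {n : ℕ}
    {J : Fin (2 * n + 1) → Submodule ℂ (H →L[ℂ] K)} (h : oddProdIdeal n J = ⊥) :
    ⨅ i, J i = ⊥ := by
  refine eq_bot_iff.mpr fun a ha => ?_
  have hmem : altProd n (fun _ => a) ∈ oddProdIdeal n J :=
    Submodule.le_topologicalClosure _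
      (Submodule.subset_span ⟨fun _ => a, Submodule.mem_iInf _ |>.mp ha, rfl⟩)
  rw [h, Submodule.mem_bot] at hmem
  exact (Submodule.mem_bot ℂ).mpr (eq_zero_of_altProd_const_eq_zero hmem)

theorem statement1_general (V : Submodule ℂ (H →L[ℂ] K))
    (θ : Submodule ℂ (H →L[ℂ] K) → Submodule ℂ A)
    (hmaps : ∀ I, IsTROIdeal V I → IsCIdeal (θ I))
    (hsurj : ∀ L, IsCIdeal L → ∃ I, IsTROIdeal V I ∧ θ I = L)
    (horder : ∀ I J, IsTROIdeal V I → IsTROIdeal V J → (I ≤ J ↔ θ I ≤ θ J))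
    (hinter : ∀ (m : ℕ) (Is : Fin (m + 1) → Submodule ℂ (H →L[ℂ] K)),
      (∀ i, IsTROIdeal V (Is i)) →
        mulProdIdeal m (fun i => θ (Is i)) = θ (⨅ i, Is i))
    (P : Submodule ℂ (H →L[ℂ] K)) (hP : IsTROIdeal V P) :
    IsTROPrimal V P ↔ IsCPrimal (θ P) := by
  have hθbot : θ ⊥ = ⊥ := by
    obtain ⟨I, hI, hθI⟩ := hsurj ⊥ isCIdeal_bot
    exact eq_bot_iff.mpr <| hθI ▸ (horder _ _ isTROIdeal_bot hI).mp bot_le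
  constructor
  · rintro ⟨-, hprimal⟩
    refine ⟨hmaps P hP, fun m L hL hprod => ?_⟩
    choose Is hIs hθIs using fun i => hsurj (L i) (hL i)
    have hinf : ⨅ i, Is i = ⊥ := by
      refine eq_bot_iff.mpr <| (horder _ _ (isTROIdeal_iInf hIs) isTROIdeal_bot).mpr ?_
      rw [← hinter m Is hIs, funext hθIs, hprod, hθbot]
    let J : Fin (2 * m + 1) → Submodule ℂ (H →L[ℂ] K) := fun i => Is ⟨i / 2, by omega⟩
    have hJ : ∀ i, IsTROIdeal V (J i) := fun i => hIs _
    have hprodJ : oddProdIdeal m J = ⊥ := by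
      refine eq_bot_iff.mpr <| hinf ▸ le_iInf fun k => ?_
      simpa [J] using oddProdIdeal_le_even hJ k (by omega)
    obtain ⟨i, hi⟩ := hprimal m J hJ hprodJ
    exact ⟨_, hθIs _ ▸ (horder _ _ (hIs _) hP).mp hi⟩
  · rintro ⟨-, hprimal⟩
    refine ⟨hP, fun n J hJ hprod => ?_⟩
    have hθprod : mulProdIdeal (2 * n) (fun i => θ (J i)) = ⊥ := by
      rw [hinter _ J hJ, iInf_eq_bot_of_oddProdIdeal_eq_bot hprod, hθbot]
    obtain ⟨i, hi⟩ := hprimal _ _ (fun i => hmaps _ (hJ i)) hθprod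
    exact ⟨i, (horder _ _ (hJ i) hP).mpr hi⟩

/-- under the canonical lattice isomorphism `θ = 𝒜(·)` between the
closed ideals of a TRO `V` and those of its linking C*-algebra `A = 𝒜(V)`,
a closed ideal `P` of `V` is primal iff `θ P` is primal in `A`. -/
theorem statement1 (V : Submodule ℂ (H →L[ℂ] K)) (hV : IsTRO V)
    (θ : Submodule ℂ (H →L[ℂ] K) → Submodule ℂ A)
    (hmaps : ∀ I, IsTROIdeal V I → IsCIdeal (θ I))
    (hsurj : ∀ L, IsCIdeal L → ∃ I, IsTROIdeal V I ∧ θ I = L)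
    (horder : ∀ I J, IsTROIdeal V I → IsTROIdeal V J → (I ≤ J ↔ θ I ≤ θ J))
    (hinter : ∀ (m : ℕ) (Is : Fin (m + 1) → Submodule ℂ (H →L[ℂ] K)),
      (∀ i, IsTROIdeal V (Is i)) →
        mulProdIdeal m (fun i => θ (Is i)) = θ (⨅ i, Is i))
    (P : Submodule ℂ (H →L[ℂ] K)) (hP : IsTROIdeal V P) :
    IsTROPrimal V P ↔ IsCPrimal (θ P) :=
  statement1_general V θ hmaps hsurj horder hinter P hP
end

section
/- Every prime ideal of a TRO V is primal. Here P is prime if for all closed ideals I, J, K of V, IJK ⊆ P implies I ⊆ P or J ⊆ P or K ⊆ P. -/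
open ContinuousLinearMap

variable {H K : Type*} [NormedAddCommGroup H] [InnerProductSpace ℂ H] [CompleteSpace H]
  [NormedAddCommGroup K] [InnerProductSpace ℂ K] [CompleteSpace K]

/-- The triple product of ideals `I J L`: the closed linear span of
`{a b* c : a ∈ I, b ∈ J, c ∈ L}`. -/
noncomputable def tripleProdIdeal (I J L : Submodule ℂ (H →L[ℂ] K)) :
    Submodule ℂ (H →L[ℂ] K) :=
  (Submodule.span ℂ
      {x | ∃ a ∈ I, ∃ b ∈ J, ∃ c ∈ L, x = tp a b c}).topologicalClosure

/-- A closed ideal `P` of the TRO `V` is prime if `IJL ⊆ P` implies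
`I ⊆ P`, `J ⊆ P` or `L ⊆ P` for all closed ideals `I, J, L` of `V`. -/
def IsTROPrime (V P : Submodule ℂ (H →L[ℂ] K)) : Prop :=
  IsTROIdeal V P ∧ ∀ I J L : Submodule ℂ (H →L[ℂ] K),
    IsTROIdeal V I → IsTROIdeal V J → IsTROIdeal V L →
    tripleProdIdeal I J L ≤ P → I ≤ P ∨ J ≤ P ∨ L ≤ P


/-!
The product of `2n + 3` ideals contains the triple product of the product of the first `2n + 1`
of them with the last two. That partial product is again a closed ideal of `V` (ternary
multiplication by elements of `V` acts on the outermost factors of an alternating product), so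
primeness puts one of the three factors in `P`, and induction on `n` puts some `J i` inside `P`.
-/

lemma Submodule.mapsTo_topologicalClosure_span {R M N : Type*} [Semiring R]
    [TopologicalSpace M] [AddCommMonoid M] [Module R M] [ContinuousAdd M]
    [ContinuousConstSMul R M] [TopologicalSpace N] [AddCommMonoid N] [Module R N]
    {S : Set M} {T : Submodule R N} (hT : IsClosed (T : Set N)) (f : M →L[R] N)
    (hS : Set.MapsTo f S T) : Set.MapsTo f (Submodule.span R S).topologicalClosure T :=
  fun _ ha => (Submodule.span R S).topologicalClosure_minimal
    (t := T.comap (f : M →ₗ[R] N)) (Submodule.span_le.2 hS) (hT.preimage f.continuous) ha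

noncomputable def tpLeft (y z : H →L[ℂ] K) : (H →L[ℂ] K) →L[ℂ] (H →L[ℂ] K) :=
  ((compL ℂ H K K).flip z).comp ((compL ℂ K H K).flip (adjoint y))

@[simp] lemma tpLeft_apply (x y z : H →L[ℂ] K) : tpLeft y z x = tp x y z := rfl

noncomputable def tpRight (x y : H →L[ℂ] K) : (H →L[ℂ] K) →L[ℂ] (H →L[ℂ] K) :=
  compL ℂ H K K (x.comp (adjoint y))

@[simp] lemma tpRight_apply (x y z : H →L[ℂ] K) : tpRight x y z = tp x y z := rfl

lemma tp_assoc (u v w y z : H →L[ℂ] K) : tp (tp u v w) y z = tp u v (tp w y z) := by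
  simp only [tp, comp_assoc]

lemma altProd_mem {n : ℕ} {W : Submodule ℂ (H →L[ℂ] K)}
    (hW : ∀ x ∈ W, ∀ y ∈ W, ∀ z ∈ W, tp x y z ∈ W)
    {a : Fin (2 * n + 1) → (H →L[ℂ] K)} (ha : ∀ i, a i ∈ W) : altProd n a ∈ W := by
  induction n with
  | zero => exact ha 0
  | succ n ih => exact hW _ (ih fun _ => ha _) _ (ha _) _ (ha _)

lemma tp_altProd (n : ℕ) (a : Fin (2 * n + 1) → (H →L[ℂ] K)) (x y : H →L[ℂ] K) :
    tp x y (altProd n a) = altProd n (fun i => if i.1 = 0 then tp x y (a i) else a i) := by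
  induction n with
  | zero => simp [altProd]
  | succ n ih =>
    rw [altProd, ← tp_assoc, ih]
    rfl

lemma altProd_tp (n : ℕ) (a : Fin (2 * n + 1) → (H →L[ℂ] K)) (y z : H →L[ℂ] K) :
    tp (altProd n a) y z = altProd n (fun i => if i.1 = 2 * n then tp (a i) y z else a i) := by
  cases n with
  | zero => simp [altProd]
  | succ n =>
    simp only [altProd]
    rw [tp_assoc]
    congr 1
    · congr 1
      funext i
      simp [show i.1 ≠ 2 * (n + 1) by omega]
    · simp [show 2 * n + 1 ≠ 2 * (n + 1) by omega]
    · simp [show 2 * n + 2 = 2 * (n + 1) by omega]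

section OddProduct

variable {n : ℕ} {J : Fin (2 * n + 1) → Submodule ℂ (H →L[ℂ] K)}

lemma altProd_mem_oddProdIdeal {a : Fin (2 * n + 1) → (H →L[ℂ] K)} (ha : ∀ i, a i ∈ J i) :
    altProd n a ∈ oddProdIdeal n J :=
  Submodule.le_topologicalClosure _ (Submodule.subset_span ⟨a, ha, rfl⟩)

lemma isClosed_oddProdIdeal : IsClosed (oddProdIdeal n J : Set (H →L[ℂ] K)) :=
  Submodule.isClosed_topologicalClosure _

lemma mapsTo_oddProdIdeal {T : Submodule ℂ (H →L[ℂ] K)} (hT : IsClosed (T : Set (H →L[ℂ] K)))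
    (f : (H →L[ℂ] K) →L[ℂ] (H →L[ℂ] K))
    (hf : ∀ a : Fin (2 * n + 1) → (H →L[ℂ] K), (∀ i, a i ∈ J i) → f (altProd n a) ∈ T) :
    Set.MapsTo f (oddProdIdeal n J) T :=
  Submodule.mapsTo_topologicalClosure_span hT f (by rintro _ ⟨a, ha, rfl⟩; exact hf a ha)

variable {V : Submodule ℂ (H →L[ℂ] K)}

lemma oddProdIdeal_le (hV : IsTRO V) (hJ : ∀ i, J i ≤ V) : oddProdIdeal n J ≤ V :=
  Submodule.topologicalClosure_minimal _
    (Submodule.span_le.2 <| by rintro _ ⟨a, ha, rfl⟩; exact altProd_mem hV.2 fun i => hJ i (ha i))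
    hV.1

lemma tp_mem_oddProdIdeal_left (hJ : ∀ i, IsTROIdeal V (J i)) {x y z : H →L[ℂ] K}
    (hx : x ∈ oddProdIdeal n J) (hy : y ∈ V) (hz : z ∈ V) : tp x y z ∈ oddProdIdeal n J := by
  refine mapsTo_oddProdIdeal (f := tpLeft y z) isClosed_oddProdIdeal (fun a ha => ?_) hx
  rw [tpLeft_apply, altProd_tp]
  refine altProd_mem_oddProdIdeal fun i => ?_
  split_ifs
  exacts [(hJ i).2.2.1 _ (ha i) _ hy _ hz, ha i]

lemma tp_mem_oddProdIdeal_right (hJ : ∀ i, IsTROIdeal V (J i)) {x y z : H →L[ℂ] K}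
    (hx : x ∈ V) (hy : y ∈ V) (hz : z ∈ oddProdIdeal n J) : tp x y z ∈ oddProdIdeal n J := by
  refine mapsTo_oddProdIdeal (f := tpRight x y) isClosed_oddProdIdeal (fun a ha => ?_) hz
  rw [tpRight_apply, tp_altProd]
  refine altProd_mem_oddProdIdeal fun i => ?_
  split_ifs
  exacts [(hJ i).2.2.2 _ hx _ hy _ (ha i), ha i]

lemma isTROIdeal_oddProdIdeal (hV : IsTRO V) (hJ : ∀ i, IsTROIdeal V (J i)) :
    IsTROIdeal V (oddProdIdeal n J) :=
  ⟨oddProdIdeal_le hV fun i => (hJ i).1, isClosed_oddProdIdeal,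
    fun _ hx _ hy _ hz => tp_mem_oddProdIdeal_left hJ hx hy hz,
    fun _ hx _ hy _ hz => tp_mem_oddProdIdeal_right hJ hx hy hz⟩

end OddProduct

lemma le_oddProdIdeal_zero (J : Fin 1 → Submodule ℂ (H →L[ℂ] K)) : J 0 ≤ oddProdIdeal 0 J :=
  fun x hx => altProd_mem_oddProdIdeal (a := fun _ => x) fun i => by rwa [show i = 0 by omega]

lemma tripleProdIdeal_le_oddProdIdeal_succ (n : ℕ)
    (J : Fin (2 * (n + 1) + 1) → Submodule ℂ (H →L[ℂ] K)) :
    tripleProdIdeal (oddProdIdeal n fun i => J ⟨i, by omega⟩) (J ⟨2 * n + 1, by omega⟩)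
      (J ⟨2 * n + 2, by omega⟩) ≤ oddProdIdeal (n + 1) J := by
  refine Submodule.topologicalClosure_minimal _ (Submodule.span_le.2 ?_) isClosed_oddProdIdeal
  rintro _ ⟨x, hx, b, hb, c, hc, rfl⟩
  refine mapsTo_oddProdIdeal (f := tpLeft b c) isClosed_oddProdIdeal (fun d hd => ?_) hx
  let a : Fin (2 * (n + 1) + 1) → (H →L[ℂ] K) := fun i =>
    if h : i.1 < 2 * n + 1 then d ⟨i, h⟩ else if i.1 = 2 * n + 1 then b else c
  have hprod : tp (altProd n d) b c = altProd (n + 1) a := by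
    simp only [altProd, a]
    congr 1
    · congr 1
      funext i
      simp [i.isLt]
    · simp
    · simp
  rw [tpLeft_apply, hprod]
  refine altProd_mem_oddProdIdeal fun i => ?_
  simp only [a]
  split_ifs with h₁ h₂
  · exact hd ⟨i, h₁⟩
  · rwa [show i = ⟨2 * n + 1, by omega⟩ from Fin.ext h₂]
  · rwa [show i = ⟨2 * n + 2, by omega⟩ from Fin.ext (show i.1 = 2 * n + 2 by omega)]

lemma IsTROPrime.exists_le_of_oddProdIdeal_le {V P : Submodule ℂ (H →L[ℂ] K)} (hV : IsTRO V)
    (hP : IsTROPrime V P) (n : ℕ) (J : Fin (2 * n + 1) → Submodule ℂ (H →L[ℂ] K))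
    (hJ : ∀ i, IsTROIdeal V (J i)) (hJP : oddProdIdeal n J ≤ P) : ∃ i, J i ≤ P := by
  induction n with
  | zero => exact ⟨0, (le_oddProdIdeal_zero J).trans hJP⟩
  | succ n ih =>
    have hprefix := isTROIdeal_oddProdIdeal hV fun i : Fin (2 * n + 1) => hJ ⟨i, by omega⟩
    rcases hP.2 _ _ _ hprefix (hJ _) (hJ _)
        ((tripleProdIdeal_le_oddProdIdeal_succ n J).trans hJP) with h | h | h
    · obtain ⟨i, hi⟩ := ih _ (fun i => hJ _) h
      exact ⟨_, hi⟩
    · exact ⟨_, h⟩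
    · exact ⟨_, h⟩

theorem statement3 (V P : Submodule ℂ (H →L[ℂ] K)) (hV : IsTRO V)
    (hprime : IsTROPrime V P) : IsTROPrimal V P :=
  ⟨hprime.1, fun n J hJ hzero =>
    hprime.exists_le_of_oddProdIdeal_le hV n J hJ (hzero ▸ bot_le)⟩
end

section
/- Let V, W be TROs and I₁, …, I_n closed ideals of V whose sum I₁ + ⋯ + I_n is closed. Then (I₁ + ⋯ + I_n) ⊗ʰ W = (I₁ ⊗ʰ W) + ⋯ + (I_n ⊗ʰ W) inside V ⊗ʰ W. -/
/-!
Statement 0: In a TRO `V ⊆ B(H,K)`, the closed linear span of products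
`I₁ I₂* I₃ ⋯ I_{2n+1}` of closed ideals equals their intersection.
-/

open ContinuousLinearMap

variable {H K : Type*} [NormedAddCommGroup H] [InnerProductSpace ℂ H] [CompleteSpace H]
  [NormedAddCommGroup K] [InnerProductSpace ℂ K] [CompleteSpace K]

variable {H₂ K₂ : Type*} [NormedAddCommGroup H₂] [InnerProductSpace ℂ H₂] [CompleteSpace H₂]
  [NormedAddCommGroup K₂] [InnerProductSpace ℂ K₂] [CompleteSpace K₂]

variable {T : Type*} [NormedAddCommGroup T] [NormedSpace ℂ T]

section
variable (V : Submodule ℂ (H →L[ℂ] K)) (W : Submodule ℂ (H₂ →L[ℂ] K₂))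

/-- `I ⊗ʰ W` inside `T = V ⊗ʰ W`: the closure of the span of elementary tensors
with first leg in the ideal `I` of `V`. -/
noncomputable def ltenW (tmul : V →ₗ[ℂ] W →ₗ[ℂ] T)
    (I : Submodule ℂ (H →L[ℂ] K)) : Submodule ℂ T :=
  (Submodule.span ℂ
      {t | ∃ a : V, ∃ b : W, (a : H →L[ℂ] K) ∈ I ∧ t = tmul a b}).topologicalClosure

end

/-!
Each closed ideal `J` of `V` comes with a map `q` on `V ⊗ʰ W` whose kernel is `J ⊗ʰ W` and which
does not distinguish `(S + J) ⊗ʰ W` from `S ⊗ʰ W`; hence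
`(S + J) ⊗ʰ W ⊆ S ⊗ʰ W + ker q = S ⊗ʰ W + J ⊗ʰ W`, and induction over the ideals gives the claim.
The induction needs every partial sum `I₁ + ⋯ + I_k` to be a closed ideal again. Closedness of
`I + J` comes from a bounded decomposition `z = x + y` of its elements, which in turn comes from
approximate units: for `x ∈ I` and `j ∈ J`, the elements `x P(j* j)` with `P` a real polynomial
without constant term lie in `I ∩ J` and approximate `x` up to `‖x - j‖`.
-/

open Filter Topology Polynomial InnerProduct

theorem Submodule.isClosed_sup_of_exists_add_eq_norm_le {R E : Type*} [Ring R]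
    [NormedAddCommGroup E] [CompleteSpace E] [Module R E] {I J : Submodule R E}
    (hI : IsClosed (I : Set E)) (hJ : IsClosed (J : Set E)) (C : ℝ)
    (h : ∀ z ∈ I ⊔ J, ∃ x ∈ I, ∃ y ∈ J, x + y = z ∧ ‖x‖ ≤ C * ‖z‖ ∧ ‖y‖ ≤ C * ‖z‖) :
    IsClosed ((I ⊔ J : Submodule R E) : Set E) := by
  refine closure_subset_iff_isClosed.mp fun z hz => ?_
  have happrox (n : ℕ) : ∃ s ∈ I ⊔ J, ‖z - s‖ < (1 / 2 : ℝ) ^ n := by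
    obtain ⟨s, hs, hzs⟩ := Metric.mem_closure_iff.mp hz _ (pow_pos one_half_pos n)
    exact ⟨s, hs, by rwa [← dist_eq_norm]⟩
  choose s hsIJ hsz using happrox
  -- the increments of `s` decay geometrically, hence so do their decompositions
  have hdiff (n : ℕ) : ‖s (n + 1) - s n‖ ≤ 2 * (1 / 2 : ℝ) ^ n := by
    have : s (n + 1) - s n = (z - s n) - (z - s (n + 1)) := by abel
    rw [this]
    refine (norm_sub_le _ _).trans ?_
    have := hsz (n + 1)
    rw [pow_succ] at this
    linarith [hsz n, pow_nonneg (one_half_pos (α := ℝ)).le n]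
  choose x hxI y hyJ hxy hx hy using fun n => h _ (sub_mem (hsIJ (n + 1)) (hsIJ n))
  have hbound (n : ℕ) : C * ‖s (n + 1) - s n‖ ≤ |C| * 2 * (1 / 2 : ℝ) ^ n := by
    rw [mul_assoc]
    exact (mul_le_mul_of_nonneg_right (le_abs_self C) (norm_nonneg _)).trans
      (mul_le_mul_of_nonneg_left (hdiff n) (abs_nonneg C))
  have hgeom : Summable fun n : ℕ => |C| * 2 * (1 / 2 : ℝ) ^ n :=
    summable_geometric_two.mul_left _
  have hxs : Summable x := .of_norm_bounded hgeom fun n => (hx n).trans (hbound n)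
  have hys : Summable y := .of_norm_bounded hgeom fun n => (hy n).trans (hbound n)
  have hsum : HasSum (fun n => s (n + 1) - s n) (∑' n, x n + ∑' n, y n) := by
    simpa only [hxy] using hxs.hasSum.add hys.hasSum
  have hs_lim : Tendsto s atTop (𝓝 z) := by
    refine tendsto_iff_norm_sub_tendsto_zero.mpr (squeeze_zero (fun _ => norm_nonneg _)
      (fun n => ?_) (tendsto_pow_atTop_nhds_zero_of_lt_one (by norm_num) one_half_lt_one))
    rw [norm_sub_rev]; exact (hsz n).le
  have htelescope : Tendsto (fun n => s n - s 0) atTop (𝓝 (∑' n, x n + ∑' n, y n)) := by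
    simpa only [Finset.sum_range_sub] using hsum.tendsto_sum_nat
  have hz : z = s 0 + (∑' n, x n + ∑' n, y n) := by
    rw [tendsto_nhds_unique (hs_lim.sub_const (s 0)) htelescope |>.symm]; abel
  rw [hz]
  refine add_mem (hsIJ 0) (add_mem (Submodule.mem_sup_left ?_) (Submodule.mem_sup_right ?_))
  · exact hI.mem_of_tendsto hxs.hasSum.tendsto_sum_nat
      (.of_forall fun n => sum_mem fun i _ => hxI i)
  · exact hJ.mem_of_tendsto hys.hasSum.tendsto_sum_nat
      (.of_forall fun n => sum_mem fun i _ => hyJ i)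

theorem exists_forall_abs_mul_one_sub_sq_pow_le (R : ℝ) {ε : ℝ} (hε : 0 < ε) :
    ∃ c : ℝ, ∃ m : ℕ, ∀ t : ℝ, |t| ≤ R →
      (0 ≤ 1 - c * t ^ 2 ∧ 1 - c * t ^ 2 ≤ 1) ∧ |t| * (1 - c * t ^ 2) ^ (2 * m) ≤ ε := by
  set c := (R ^ 2 + ε ^ 2)⁻¹
  have hc : 0 < c := by positivity
  have hcR : c * R ^ 2 + c * ε ^ 2 = 1 := by rw [← mul_add]; exact inv_mul_cancel₀ (by positivity)
  have hq0 : 0 ≤ 1 - c * ε ^ 2 := by nlinarith [sq_nonneg R]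
  have hq1 : 1 - c * ε ^ 2 < 1 := by nlinarith
  have hdecay := (tendsto_pow_atTop_nhds_zero_of_lt_one hq0 hq1).const_mul R
  obtain ⟨m, hm⟩ := (hdecay.eventually_lt_const (by simpa using hε)).exists
  refine ⟨c, m, fun t ht => ?_⟩
  have ht2 : t ^ 2 ≤ R ^ 2 := by simpa only [sq_abs] using pow_le_pow_left₀ (abs_nonneg t) ht 2
  have hbase : 0 ≤ 1 - c * t ^ 2 ∧ 1 - c * t ^ 2 ≤ 1 :=
    ⟨by nlinarith [sq_nonneg ε], by nlinarith [sq_nonneg t]⟩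
  refine ⟨hbase, ?_⟩
  rcases le_or_gt |t| ε with htε | htε
  · exact (mul_le_of_le_one_right (abs_nonneg t) (pow_le_one₀ hbase.1 hbase.2)).trans htε
  · have hεt : ε ^ 2 ≤ t ^ 2 := by simpa only [sq_abs] using pow_le_pow_left₀ hε.le htε.le 2
    have hpow : (1 - c * t ^ 2) ^ (2 * m) ≤ (1 - c * ε ^ 2) ^ m :=
      calc (1 - c * t ^ 2) ^ (2 * m) ≤ (1 - c * ε ^ 2) ^ (2 * m) :=
            pow_le_pow_left₀ hbase.1 (by nlinarith) _
        _ ≤ (1 - c * ε ^ 2) ^ m := pow_le_pow_of_le_one hq0 hq1.le (by omega)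
    calc |t| * (1 - c * t ^ 2) ^ (2 * m) ≤ R * (1 - c * ε ^ 2) ^ m :=
          mul_le_mul ht hpow (pow_nonneg hbase.1 _) ((abs_nonneg t).trans ht)
      _ ≤ ε := hm.le

theorem exists_polynomial_norm_comp_one_sub_aeval_adjoint_comp_self_le (j : H →L[ℂ] K) {ε : ℝ}
    (hε : 0 < ε) :
    ∃ P : ℝ[X], P.coeff 0 = 0 ∧ ‖1 - aeval (j† ∘L j) P‖ ≤ 1 ∧
      ‖j ∘L (1 - aeval (j† ∘L j) P)‖ ≤ ε := by
  set a := j† ∘L j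
  have ha : IsSelfAdjoint a := by
    rw [IsSelfAdjoint, star_eq_adjoint, adjoint_comp, adjoint_adjoint]
  obtain ⟨c, m, hcm⟩ := exists_forall_abs_mul_one_sub_sq_pow_le (‖a‖ * ‖(1 : H →L[ℂ] H)‖)
    (pow_pos hε 2)
  have hspec (t : ℝ) (ht : t ∈ spectrum ℝ a) := hcm t (spectrum.norm_le_norm_mul_of_mem ht)
  set g : ℝ → ℝ := fun t => (1 - c * t ^ 2) ^ m
  refine ⟨1 - (1 - C c * X ^ 2) ^ m, by simp [coeff_zero_eq_eval_zero], ?_⟩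
  have hb : 1 - aeval a (1 - (1 - C c * X ^ 2) ^ m) = cfc g a := by
    rw [map_sub, map_one, sub_sub_cancel, ← cfc_polynomial _ a ha]
    congr 1
    funext t
    simp [g]
  have hsa : IsSelfAdjoint (cfc g a) := cfc_predicate g a
  rw [hb]
  refine ⟨norm_cfc_le zero_le_one fun t ht => ?_, ?_⟩
  · rw [Real.norm_eq_abs, abs_of_nonneg (pow_nonneg (hspec t ht).1.1 m)]
    exact pow_le_one₀ (hspec t ht).1.1 (hspec t ht).1.2
  · -- C*-identity `‖j b‖² = ‖b (j† j) b‖`, and `b (j† j) b` is `t ↦ t g(t)²` applied to `j† j`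
    have hsq : ‖j ∘L cfc g a‖ ^ 2 = ‖cfc (fun t => g t * t * g t) a‖ := by
      have hprod : cfc (fun t => g t * t * g t) a = cfc g a * a * cfc g a := by
        rw [cfc_mul (fun t => g t * t) g a, cfc_mul g (fun t => t) a, cfc_id' ℝ a]
      rw [sq, ← norm_adjoint_comp_self, adjoint_comp, ← star_eq_adjoint (cfc g a), hsa.star_eq,
        hprod]
      rfl
    refine (pow_le_pow_iff_left₀ (norm_nonneg _) hε.le two_ne_zero).mp ?_
    rw [hsq]
    refine norm_cfc_le (by positivity) fun t ht => ?_
    calc ‖g t * t * g t‖ = |t| * (1 - c * t ^ 2) ^ (2 * m) := by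
          rw [Real.norm_eq_abs, abs_mul, abs_mul, abs_of_nonneg (pow_nonneg (hspec t ht).1.1 m)]
          ring
      _ ≤ ε ^ 2 := (hspec t ht).2

section TROIdeal

variable {V I J : Submodule ℂ (H →L[ℂ] K)}

theorem comp_pow_succ_adjoint_comp_self (x j : H →L[ℂ] K) (k : ℕ) :
    x ∘L (j† ∘L j) ^ (k + 1) = tp (x ∘L (j† ∘L j) ^ k) j j := by
  rw [tp, pow_succ, mul_def]
  rfl

theorem IsTROIdeal.comp_pow_adjoint_comp_self_mem (hI : IsTROIdeal V I) {x j : H →L[ℂ] K}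
    (hx : x ∈ I) (hj : j ∈ V) (k : ℕ) : x ∘L (j† ∘L j) ^ k ∈ I := by
  induction k with
  | zero => simpa [one_def] using hx
  | succ k ih => rw [comp_pow_succ_adjoint_comp_self]; exact hI.2.2.1 _ ih j hj j hj

theorem IsTROIdeal.comp_aeval_adjoint_comp_self_mem_inf (hI : IsTROIdeal V I)
    (hJ : IsTROIdeal V J) {x j : H →L[ℂ] K} (hx : x ∈ I) (hj : j ∈ J)
    {P : ℝ[X]} (hP : P.coeff 0 = 0) : x ∘L aeval (j† ∘L j) P ∈ I ⊓ J := by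
  have hjV := hJ.1 hj
  rw [aeval_eq_sum_range, comp_finsetSum]
  refine sum_mem fun i _ => ?_
  rw [comp_smul]
  -- every monomial but the constant one ends in the factor `j ∈ J`
  rcases i with _ | k
  · simp [hP]
  · refine Submodule.smul_of_tower_mem _ _ ⟨hI.comp_pow_adjoint_comp_self_mem hx hjV _, ?_⟩
    rw [comp_pow_succ_adjoint_comp_self]
    exact hJ.2.2.2 _ (hI.1 (hI.comp_pow_adjoint_comp_self_mem hx hjV k)) j hjV j hj

theorem IsTROIdeal.exists_mem_inf_norm_sub_le (hI : IsTROIdeal V I) (hJ : IsTROIdeal V J)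
    {x j : H →L[ℂ] K} (hx : x ∈ I) (hj : j ∈ J) {ε : ℝ} (hε : 0 < ε) :
    ∃ w ∈ I ⊓ J, ‖x - w‖ ≤ ‖x - j‖ + ε := by
  obtain ⟨P, hP0, hunit, hj_small⟩ :=
    exists_polynomial_norm_comp_one_sub_aeval_adjoint_comp_self_le j hε
  set e := aeval (j† ∘L j) P
  refine ⟨x ∘L e, hI.comp_aeval_adjoint_comp_self_mem_inf hJ hx hj hP0, ?_⟩
  have hsplit : x - x ∘L e = (x - j) ∘L (1 - e) + j ∘L (1 - e) := by
    rw [← ContinuousLinearMap.add_comp, sub_add_cancel, comp_sub, one_def, comp_id]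
  calc ‖x - x ∘L e‖ ≤ ‖x - j‖ * ‖1 - e‖ + ‖j ∘L (1 - e)‖ :=
        hsplit ▸ norm_add_le_of_le (opNorm_comp_le _ _) le_rfl
    _ ≤ ‖x - j‖ * 1 + ε := by gcongr
    _ = ‖x - j‖ + ε := by rw [mul_one]

theorem IsTROIdeal.exists_add_eq_norm_le (hI : IsTROIdeal V I) (hJ : IsTROIdeal V J)
    {z : H →L[ℂ] K} (hz : z ∈ I ⊔ J) :
    ∃ x ∈ I, ∃ y ∈ J, x + y = z ∧ ‖x‖ ≤ 3 * ‖z‖ ∧ ‖y‖ ≤ 3 * ‖z‖ := by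
  rcases eq_or_ne z 0 with rfl | hz0
  · exact ⟨0, zero_mem _, 0, zero_mem _, add_zero 0, by simp, by simp⟩
  obtain ⟨x, hx, y, hy, rfl⟩ := Submodule.mem_sup.mp hz
  obtain ⟨w, hw, hxw⟩ := hI.exists_mem_inf_norm_sub_le hJ hx (neg_mem hy) (norm_pos_iff.mpr hz0)
  rw [sub_neg_eq_add] at hxw
  refine ⟨x - w, sub_mem hx hw.1, y + w, add_mem hy hw.2, by abel,
    by linarith [norm_nonneg (x + y)], ?_⟩
  calc ‖y + w‖ = ‖(x + y) - (x - w)‖ := by congr 1; abel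
    _ ≤ ‖x + y‖ + ‖x - w‖ := norm_sub_le _ _
    _ ≤ 3 * ‖x + y‖ := by linarith

theorem IsTROIdeal.isClosed_sup (hI : IsTROIdeal V I) (hJ : IsTROIdeal V J) :
    IsClosed ((I ⊔ J : Submodule ℂ (H →L[ℂ] K)) : Set (H →L[ℂ] K)) :=
  Submodule.isClosed_sup_of_exists_add_eq_norm_le hI.2.1 hJ.2.1 3 fun _ hz =>
    hI.exists_add_eq_norm_le hJ hz

theorem tp_add_left (x x' y z : H →L[ℂ] K) : tp (x + x') y z = tp x y z + tp x' y z := by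
  simp [tp, ContinuousLinearMap.add_comp]

theorem tp_add_right (x y z z' : H →L[ℂ] K) : tp x y (z + z') = tp x y z + tp x y z' := by
  simp [tp, comp_add]

theorem IsTROIdeal.sup (hI : IsTROIdeal V I) (hJ : IsTROIdeal V J) : IsTROIdeal V (I ⊔ J) := by
  refine ⟨sup_le hI.1 hJ.1, hI.isClosed_sup hJ, fun a ha y hy z hz => ?_, fun x hx y hy a ha => ?_⟩
  · obtain ⟨a₁, h₁, a₂, h₂, rfl⟩ := Submodule.mem_sup.mp ha
    rw [tp_add_left]
    exact add_mem (Submodule.mem_sup_left (hI.2.2.1 _ h₁ y hy z hz))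
      (Submodule.mem_sup_right (hJ.2.2.1 _ h₂ y hy z hz))
  · obtain ⟨a₁, h₁, a₂, h₂, rfl⟩ := Submodule.mem_sup.mp ha
    rw [tp_add_right]
    exact add_mem (Submodule.mem_sup_left (hI.2.2.2 x hx y hy _ h₁))
      (Submodule.mem_sup_right (hJ.2.2.2 x hx y hy _ h₂))

theorem IsTROIdeal.bot (V : Submodule ℂ (H →L[ℂ] K)) : IsTROIdeal V ⊥ := by
  refine ⟨bot_le, by simp, ?_, ?_⟩ <;>
    simp +contextual [Submodule.mem_bot, tp]

theorem IsTROIdeal.finset_sup {ι : Type*} (s : Finset ι) {I : ι → Submodule ℂ (H →L[ℂ] K)}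
    (hI : ∀ i, IsTROIdeal V (I i)) : IsTROIdeal V (s.sup I) :=
  Finset.sup_induction (IsTROIdeal.bot V) (fun _ h₁ _ h₂ => h₁.sup h₂) fun i _ => hI i

end TROIdeal

section ltenW

variable (V : Submodule ℂ (H →L[ℂ] K)) (W : Submodule ℂ (H₂ →L[ℂ] K₂))
  (tmul : V →ₗ[ℂ] W →ₗ[ℂ] T)

section

omit [CompleteSpace H] [CompleteSpace K] [CompleteSpace H₂] [CompleteSpace K₂]

theorem ltenW_mono {I₁ I₂ : Submodule ℂ (H →L[ℂ] K)} (h : I₁ ≤ I₂) :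
    ltenW V W tmul I₁ ≤ ltenW V W tmul I₂ :=
  Submodule.topologicalClosure_mono <| Submodule.span_mono <| by
    rintro t ⟨a, b, ha, rfl⟩
    exact ⟨a, b, h ha, rfl⟩

theorem ltenW_bot : ltenW V W tmul ⊥ = ⊥ := by
  refine eq_bot_iff.mpr (Submodule.topologicalClosure_minimal _ ?_ (by simp))
  rw [Submodule.span_le]
  rintro t ⟨a, b, ha, rfl⟩
  simp [show a = 0 from Subtype.ext ((Submodule.mem_bot ℂ).mp ha)]

theorem ltenW_sup_eq_of_image_eq {TJ : Type*} [AddCommGroup TJ] [Module ℂ TJ] (q : T →ₗ[ℂ] TJ)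
    {S J : Submodule ℂ (H →L[ℂ] K)} (hker : LinearMap.ker q = ltenW V W tmul J)
    (himage : q '' ltenW V W tmul (S ⊔ J) = q '' ltenW V W tmul S) :
    ltenW V W tmul (S ⊔ J) = ltenW V W tmul S ⊔ ltenW V W tmul J := by
  refine le_antisymm ?_
    (sup_le (ltenW_mono V W tmul le_sup_left) (ltenW_mono V W tmul le_sup_right))
  have hmap : (ltenW V W tmul (S ⊔ J)).map q = (ltenW V W tmul S).map q :=
    SetLike.coe_injective (by simpa only [Submodule.map_coe] using himage)
  calc ltenW V W tmul (S ⊔ J) ≤ ((ltenW V W tmul (S ⊔ J)).map q).comap q :=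
        Submodule.le_comap_map _ _
    _ = ltenW V W tmul S ⊔ ltenW V W tmul J := by rw [hmap, Submodule.comap_map_eq, hker]

end

omit [CompleteSpace H₂] [CompleteSpace K₂] in
theorem ltenW_finset_sup
    (hsup : ∀ S J : Submodule ℂ (H →L[ℂ] K), IsTROIdeal V S → IsTROIdeal V J →
      ltenW V W tmul (S ⊔ J) = ltenW V W tmul S ⊔ ltenW V W tmul J)
    {ι : Type*} (s : Finset ι) {I : ι → Submodule ℂ (H →L[ℂ] K)} (hI : ∀ i, IsTROIdeal V (I i)) :
    ltenW V W tmul (s.sup I) = s.sup fun i => ltenW V W tmul (I i) := by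
  classical
  induction s using Finset.induction_on with
  | empty => exact ltenW_bot V W tmul
  | insert i s _ ih =>
    rw [Finset.sup_insert, Finset.sup_insert, sup_comm,
      hsup _ _ (IsTROIdeal.finset_sup s hI) (hI i), ih, sup_comm]

end ltenW

theorem statement6_general
    (V : Submodule ℂ (H →L[ℂ] K))
    (W : Submodule ℂ (H₂ →L[ℂ] K₂))
    (tmul : V →ₗ[ℂ] W →ₗ[ℂ] T)
    (hquot : ∀ J : Submodule ℂ (H →L[ℂ] K), IsTROIdeal V J →
      ∃ (TJ : Type) (_ : NormedAddCommGroup TJ) (_ : NormedSpace ℂ TJ)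
        (q : T →L[ℂ] TJ),
        LinearMap.ker (q : T →ₗ[ℂ] TJ) = ltenW V W tmul J ∧
        ∀ I : Submodule ℂ (H →L[ℂ] K), IsTROIdeal V I →
          q '' (ltenW V W tmul (I ⊔ J) : Set T) = q '' (ltenW V W tmul I : Set T) ∧
          IsClosed (q '' (ltenW V W tmul I : Set T)))
    (n : ℕ) (I : Fin n → Submodule ℂ (H →L[ℂ] K))
    (hI : ∀ i, IsTROIdeal V (I i)) :
    ltenW V W tmul (⨆ i, I i) = ⨆ i, ltenW V W tmul (I i) := by
  have hsup (S J : Submodule ℂ (H →L[ℂ] K)) (hS : IsTROIdeal V S) (hJ : IsTROIdeal V J) :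
      ltenW V W tmul (S ⊔ J) = ltenW V W tmul S ⊔ ltenW V W tmul J := by
    obtain ⟨TJ, _, _, q, hker, himage⟩ := hquot J hJ
    exact ltenW_sup_eq_of_image_eq V W tmul (q : T →ₗ[ℂ] TJ) hker (himage S hS).1
  simpa only [Finset.sup_univ_eq_iSup] using ltenW_finset_sup V W tmul hsup Finset.univ hI

/-- if `I₁, …, I_n` are closed ideals of the TRO `V` whose sum is
closed, then `(I₁ + ⋯ + I_n) ⊗ʰ W = I₁ ⊗ʰ W + ⋯ + I_n ⊗ʰ W` inside
`T = V ⊗ʰ W`.  The hypothesis `hquot` encodes the available fact that for each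
closed ideal `J` of `V`, the quotient map `π : V → V/J` induces a bounded map
`π ⊗ 1 : V ⊗ʰ W → (V/J) ⊗ʰ W` with kernel `J ⊗ʰ W` which maps `I ⊗ʰ W` onto
`((I+J)/J) ⊗ʰ W`, i.e. `(π ⊗ 1)((I ⊔ J) ⊗ʰ W) = (π ⊗ 1)(I ⊗ʰ W)`. -/
theorem statement6 [CompleteSpace T]
    (V : Submodule ℂ (H →L[ℂ] K)) (hV : IsTRO V)
    (W : Submodule ℂ (H₂ →L[ℂ] K₂)) (hW : IsTRO W)
    (tmul : V →ₗ[ℂ] W →ₗ[ℂ] T)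
    (hdense : (Submodule.span ℂ
        {t : T | ∃ a : V, ∃ b : W, t = tmul a b}).topologicalClosure = ⊤)
    (hquot : ∀ J : Submodule ℂ (H →L[ℂ] K), IsTROIdeal V J →
      ∃ (TJ : Type) (_ : NormedAddCommGroup TJ) (_ : NormedSpace ℂ TJ)
        (q : T →L[ℂ] TJ),
        LinearMap.ker (q : T →ₗ[ℂ] TJ) = ltenW V W tmul J ∧
        ∀ I : Submodule ℂ (H →L[ℂ] K), IsTROIdeal V I →
          q '' (ltenW V W tmul (I ⊔ J) : Set T) = q '' (ltenW V W tmul I : Set T) ∧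
          IsClosed (q '' (ltenW V W tmul I : Set T)))
    (n : ℕ) (I : Fin n → Submodule ℂ (H →L[ℂ] K))
    (hI : ∀ i, IsTROIdeal V (I i))
    (hsum : IsClosed ((⨆ i, I i : Submodule ℂ (H →L[ℂ] K)) : Set (H →L[ℂ] K))) :
    ltenW V W tmul (⨆ i, I i) = ⨆ i, ltenW V W tmul (I i) :=
  statement6_general V W tmul hquot n I hI
end

section
/- Let V be a TRO and B a C*-algebra. A proper ε-ideal P of V ⊗ʰ B is a minimal primal ideal if and only if P = I ⊗ʰ B + V ⊗ʰ J for some minimal primal ideals I of V and J of B. Moreover, (I,J) ↦ V⊗ʰJ + I⊗ʰB is a bijection from Min-Primal(V) × Min-Primal(B) onto Min-Primal(V ⊗ʰ B). -/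
/-!
A primal ideal `P` of `V ⊗ʰ B` contains some `Φ I J` with `I`, `J` primal, and `Φ I J` is itself
primal, so minimality of `P` forces `P = Φ I J`. Shrinking `I` (or `J`) to a smaller primal ideal
keeps `Φ I J` primal and below `P`, hence equal to `P`, and order-reflection gives back the old
coordinate: `I` and `J` are minimal. Conversely a primal ideal below `Φ I J` with `I`, `J` minimal
contains some `Φ I' J'`, and order-reflection with minimality gives `I' = I`, `J' = J`.
-/

section MinimalMap₂

variable {α β γ : Type*} [PartialOrder α] [PartialOrder β] [PartialOrder γ]
  {f : α → β → γ} {S : Set α} {T : Set β} {U : Set γ}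

theorem sep_forall_le_imp_eq_eq_setOf_minimal (S : Set α) :
    {x ∈ S | ∀ y ∈ S, y ≤ x → y = x} = {x | Minimal (· ∈ S) x} :=
  Set.ext fun _ => ⟨fun h => ⟨h.1, fun y hy hyx => (h.2 y hy hyx).ge⟩,
    fun h => ⟨h.prop, fun _ hy hyx => h.eq_of_le hy hyx⟩⟩

theorem minimal_map₂ (hmem : ∀ I ∈ S, ∀ J ∈ T, f I J ∈ U)
    (hle : ∀ P ∈ U, ∃ I ∈ S, ∃ J ∈ T, f I J ≤ P)
    (hreflect : ∀ I ∈ S, ∀ I' ∈ S, ∀ J ∈ T, ∀ J' ∈ T, f I J ≤ f I' J' → I ≤ I' ∧ J ≤ J')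
    {I : α} {J : β} (hI : Minimal (· ∈ S) I) (hJ : Minimal (· ∈ T) J) :
    Minimal (· ∈ U) (f I J) := by
  refine ⟨hmem I hI.prop J hJ.prop, fun P hP hPle => ?_⟩
  obtain ⟨I', hI', J', hJ', hle'⟩ := hle P hP
  obtain ⟨hI'I, hJ'J⟩ := hreflect I' hI' I hI.prop J' hJ' J hJ.prop (hle'.trans hPle)
  rwa [hI.eq_of_le hI' hI'I, hJ.eq_of_le hJ' hJ'J] at hle'

theorem exists_minimal_map₂_eq (hmem : ∀ I ∈ S, ∀ J ∈ T, f I J ∈ U)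
    (hle : ∀ P ∈ U, ∃ I ∈ S, ∃ J ∈ T, f I J ≤ P)
    (hmono : ∀ I I' J J', I ≤ I' → J ≤ J' → f I J ≤ f I' J')
    (hreflect : ∀ I ∈ S, ∀ I' ∈ S, ∀ J ∈ T, ∀ J' ∈ T, f I J ≤ f I' J' → I ≤ I' ∧ J ≤ J')
    {P : γ} (hP : Minimal (· ∈ U) P) :
    ∃ I, Minimal (· ∈ S) I ∧ ∃ J, Minimal (· ∈ T) J ∧ P = f I J := by
  obtain ⟨I, hI, J, hJ, hIJP⟩ := hle P hP.prop
  have hP_eq : f I J = P := hP.eq_of_le (hmem I hI J hJ) hIJP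
  have eq_of_le {I' J'} (hI' : I' ∈ S) (hJ' : J' ∈ T) (hI'I : I' ≤ I) (hJ'J : J' ≤ J) :
      f I' J' = f I J :=
    (hP.eq_of_le (hmem I' hI' J' hJ') ((hmono _ _ _ _ hI'I hJ'J).trans hIJP)).trans hP_eq.symm
  refine ⟨I, ⟨hI, fun I' hI' hI'I => ?_⟩, J, ⟨hJ, fun J' hJ' hJ'J => ?_⟩, hP_eq.symm⟩
  · exact (hreflect I hI I' hI' J hJ J hJ (eq_of_le hI' hJ hI'I le_rfl).ge).1
  · exact (hreflect I hI I hI J hJ J' hJ' (eq_of_le hI hJ' le_rfl hJ'J).ge).2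

theorem injOn_uncurry_of_le_imp_le
    (hreflect : ∀ I ∈ S, ∀ I' ∈ S, ∀ J ∈ T, ∀ J' ∈ T, f I J ≤ f I' J' → I ≤ I' ∧ J ≤ J') :
    Set.InjOn (fun p : α × β => f p.1 p.2) (S ×ˢ T) := by
  rintro ⟨I, J⟩ ⟨hI, hJ⟩ ⟨I', J'⟩ ⟨hI', hJ'⟩ heq
  obtain ⟨hII', hJJ'⟩ := hreflect I hI I' hI' J hJ J' hJ' heq.le
  obtain ⟨hI'I, hJ'J⟩ := hreflect I' hI' I hI J' hJ' J hJ heq.ge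
  exact Prod.ext (le_antisymm hII' hI'I) (le_antisymm hJJ' hJ'J)

end MinimalMap₂

theorem statement15_general {LV LB LT : Type*}
    [CompleteLattice LV] [CompleteLattice LB] [CompleteLattice LT]
    (Phi : LV → LB → LT)
    (PrimalV : Set LV) (PrimalB : Set LB) (PrimalT : Set LT)
    (hPV : ∀ I ∈ PrimalV, I ≠ ⊤) (hPB : ∀ J ∈ PrimalB, J ≠ ⊤)
    (hiff : ∀ I J, I ≠ ⊤ → J ≠ ⊤ →
      (Phi I J ∈ PrimalT ↔ I ∈ PrimalV ∧ J ∈ PrimalB))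
    (hcontain : ∀ P ∈ PrimalT, ∃ I ∈ PrimalV, ∃ J ∈ PrimalB, Phi I J ≤ P)
    (hmono : ∀ I I' J J', I ≤ I' → J ≤ J' → Phi I J ≤ Phi I' J')
    (hord : ∀ I I' J J', I ≠ ⊤ → I' ≠ ⊤ → J ≠ ⊤ → J' ≠ ⊤ →
      Phi I J ≤ Phi I' J' → I ≤ I' ∧ J ≤ J') :
    (∀ P, P ≠ ⊤ →
      (P ∈ {P ∈ PrimalT | ∀ P' ∈ PrimalT, P' ≤ P → P' = P} ↔
        ∃ I ∈ {I ∈ PrimalV | ∀ I' ∈ PrimalV, I' ≤ I → I' = I},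
          ∃ J ∈ {J ∈ PrimalB | ∀ J' ∈ PrimalB, J' ≤ J → J' = J},
            P = Phi I J)) ∧
    Set.BijOn (fun p : LV × LB => Phi p.1 p.2)
      ({I ∈ PrimalV | ∀ I' ∈ PrimalV, I' ≤ I → I' = I} ×ˢ
        {J ∈ PrimalB | ∀ J' ∈ PrimalB, J' ≤ J → J' = J})
      {P ∈ PrimalT | ∀ P' ∈ PrimalT, P' ≤ P → P' = P} := by
  have hmem : ∀ I ∈ PrimalV, ∀ J ∈ PrimalB, Phi I J ∈ PrimalT := fun I hI J hJ =>
    (hiff I J (hPV I hI) (hPB J hJ)).2 ⟨hI, hJ⟩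
  have hreflect : ∀ I ∈ PrimalV, ∀ I' ∈ PrimalV, ∀ J ∈ PrimalB, ∀ J' ∈ PrimalB,
      Phi I J ≤ Phi I' J' → I ≤ I' ∧ J ≤ J' := fun I hI I' hI' J hJ J' hJ' =>
    hord I I' J J' (hPV I hI) (hPV I' hI') (hPB J hJ) (hPB J' hJ')
  have map_minimal {I J} (hI : Minimal (· ∈ PrimalV) I) (hJ : Minimal (· ∈ PrimalB) J) :=
    minimal_map₂ hmem hcontain hreflect hI hJ
  have exists_eq {P} (hP : Minimal (· ∈ PrimalT) P) :=
    exists_minimal_map₂_eq hmem hcontain hmono hreflect hP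
  simp only [sep_forall_le_imp_eq_eq_setOf_minimal]
  refine ⟨fun P _ => ⟨exists_eq, ?_⟩, fun p hp => map_minimal hp.1 hp.2,
    (injOn_uncurry_of_le_imp_le hreflect).mono (Set.prod_mono (fun _ h => h.prop)
      (fun _ h => h.prop)), fun P hP => ?_⟩
  · rintro ⟨I, hI, J, hJ, rfl⟩
    exact map_minimal hI hJ
  · obtain ⟨I, hI, J, hJ, rfl⟩ := exists_eq hP
    exact ⟨(I, J), ⟨hI, hJ⟩, rfl⟩

theorem statement15 {LV LB LT : Type*}
    [CompleteLattice LV] [CompleteLattice LB] [CompleteLattice LT]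
    (Phi : LV → LB → LT)
    (PrimalV : Set LV) (PrimalB : Set LB) (PrimalT : Set LT)
    (hPV : ∀ I ∈ PrimalV, I ≠ ⊤) (hPB : ∀ J ∈ PrimalB, J ≠ ⊤)
    (hPT : ∀ P ∈ PrimalT, P ≠ ⊤)
    (hiff : ∀ I J, I ≠ ⊤ → J ≠ ⊤ →
      (Phi I J ∈ PrimalT ↔ I ∈ PrimalV ∧ J ∈ PrimalB))
    (hcontain : ∀ P ∈ PrimalT, ∃ I ∈ PrimalV, ∃ J ∈ PrimalB, Phi I J ≤ P)
    (hmono : ∀ I I' J J', I ≤ I' → J ≤ J' → Phi I J ≤ Phi I' J')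
    (hord : ∀ I I' J J', I ≠ ⊤ → I' ≠ ⊤ → J ≠ ⊤ → J' ≠ ⊤ →
      Phi I J ≤ Phi I' J' → I ≤ I' ∧ J ≤ J') :
    (∀ P, P ≠ ⊤ →
      (P ∈ {P ∈ PrimalT | ∀ P' ∈ PrimalT, P' ≤ P → P' = P} ↔
        ∃ I ∈ {I ∈ PrimalV | ∀ I' ∈ PrimalV, I' ≤ I → I' = I},
          ∃ J ∈ {J ∈ PrimalB | ∀ J' ∈ PrimalB, J' ≤ J → J' = J},
            P = Phi I J)) ∧
    Set.BijOn (fun p : LV × LB => Phi p.1 p.2)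
      ({I ∈ PrimalV | ∀ I' ∈ PrimalV, I' ≤ I → I' = I} ×ˢ
        {J ∈ PrimalB | ∀ J' ∈ PrimalB, J' ≤ J → J' = J})
      {P ∈ PrimalT | ∀ P' ∈ PrimalT, P' ≤ P → P' = P} :=
  statement15_general Phi PrimalV PrimalB PrimalT hPV hPB hiff hcontain hmono hord
end
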